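/- arXiv:math/0503242 — 2 statements merged into one kernel-verified Lean document; each statement's English description precedes it below -/
import Mathlib

section
/- For an algebra A and a hypersubstitution σ, an identity p = q holds in the derived algebra A_σ if and only if the identity σ(p) = σ(q) holds in A. -/
/-- A similarity type: operation symbols with arities. -/
structure Signature where
  I : Type
  arity : I → ℕ

/-- Terms of a signature over a variable type. -/
inductive Term (sig : Signature) (V : Type) : Type
  | var : V → Term sig V
  | app : (i : sig.I) → (Fin (sig.arity i) → Term sig V) → Term sig V

/-- Substitution of terms for variables. -/
def Term.bind {sig : Signature} {V W : Type} : Term sig V → (V → Term sig W) → Term sig W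
  | .var v, f => f v
  | .app i ts, f => .app i (fun k => (ts k).bind f)

/-- An algebra of a signature (with nonempty carrier). -/
structure Alg (sig : Signature) where
  carrier : Type
  interp : (i : sig.I) → (Fin (sig.arity i) → carrier) → carrier
  nonempty : Nonempty carrier

/-- Evaluation of a term in an algebra under an assignment. -/
def Alg.eval {sig : Signature} {V : Type} (A : Alg sig) (v : V → A.carrier) :
    Term sig V → A.carrier
  | .var x => v x
  | .app i ts => A.interp i (fun k => A.eval v (ts k))

/-- A hypersubstitution assigns to each operation symbol a term of the same arity. -/
abbrev Hyp (sig : Signature) := (i : sig.I) → Term sig (Fin (sig.arity i))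

/-- The extension of a hypersubstitution to all terms. -/
def hypApply {sig : Signature} {V : Type} (σ : Hyp sig) : Term sig V → Term sig V
  | .var x => .var x
  | .app i ts => (σ i).bind (fun k => hypApply σ (ts k))

/-- The derived algebra `A_σ`. -/
def derive {sig : Signature} (σ : Hyp sig) (A : Alg sig) : Alg sig :=
  ⟨A.carrier, fun i args => A.eval args (σ i), A.nonempty⟩

/-- An identity `p = q` holds in an algebra. -/
def Satisfies {sig : Signature} (A : Alg sig) (e : Term sig ℕ × Term sig ℕ) : Prop :=
  ∀ v : ℕ → A.carrier, A.eval v e.1 = A.eval v e.2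

/-- Models of a set of identities. -/
def Models {sig : Signature} (E : Set (Term sig ℕ × Term sig ℕ)) : Set (Alg sig) :=
  {A | ∀ e ∈ E, Satisfies A e}

/-- Equational theory of a class of algebras. -/
def Th {sig : Signature} (K : Set (Alg sig)) : Set (Term sig ℕ × Term sig ℕ) :=
  {e | ∀ A ∈ K, Satisfies A e}

/-- The variety generated by a class. -/
def varGen {sig : Signature} (K : Set (Alg sig)) : Set (Alg sig) := Models (Th K)

/-- A class is a variety iff it is an equational class. -/
def IsVariety {sig : Signature} (V : Set (Alg sig)) : Prop := ∃ E, V = Models E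

/-- The derived variety `V_σ`. -/
def derivedVariety {sig : Signature} (V : Set (Alg sig)) (σ : Hyp sig) : Set (Alg sig) :=
  varGen {B | ∃ A ∈ V, B = derive σ A}

/-- A class is trivial if all its algebras are one-element. -/
def TrivialVar {sig : Signature} (V : Set (Alg sig)) : Prop :=
  ∀ A ∈ V, Subsingleton A.carrier

/-- A variety is fluid if it contains no proper derived variety. -/
def Fluid {sig : Signature} (V : Set (Alg sig)) : Prop :=
  ∀ σ : Hyp sig, derivedVariety V σ ⊆ V → derivedVariety V σ = V

/-- The signature with one binary operation symbol. -/
def sig2 : Signature := ⟨Unit, fun _ => 2⟩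

/-- The binary operation of a `sig2`-algebra. -/
def bop (A : Alg sig2) (x y : A.carrier) : A.carrier := A.interp () ![x, y]

/-- The hypersubstitution sending `x·y` to the first projection `x`. -/
def proj1 : Hyp sig2 := fun _ => Term.var ⟨0, by simp [sig2]⟩

/-- The variety of bands (idempotent semigroups). -/
def Bands : Set (Alg sig2) :=
  {A | (∀ x y z, bop A (bop A x y) z = bop A x (bop A y z)) ∧ (∀ x, bop A x x = x)}

/-- The variety of left-zero semigroups. -/
def LeftZero : Set (Alg sig2) := {A | ∀ x y, bop A x y = x}

theorem Alg.eval_bind {sig : Signature} {V W : Type} (A : Alg sig) (v : W → A.carrier)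
    (t : Term sig V) (f : V → Term sig W) :
    A.eval v (t.bind f) = A.eval (fun x => A.eval v (f x)) t := by
  induction t with
  | var x => rfl
  | app i ts ih => simp only [Term.bind, Alg.eval, ih]

theorem Alg.eval_derive {sig : Signature} {V : Type} (A : Alg sig) (σ : Hyp sig)
    (v : V → A.carrier) (t : Term sig V) :
    (derive σ A).eval v t = A.eval v (hypApply σ t) := by
  induction t with
  | var x => rfl
  | app i ts ih =>
    simp only [Alg.eval, hypApply, Alg.eval_bind, ← ih]
    rfl

/-- `p = q` holds in `A_σ` iff `σ(p) = σ(q)` holds in `A`. -/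
theorem satisfies_derive_iff {sig : Signature} (A : Alg sig) (σ : Hyp sig)
    (p q : Term sig ℕ) :
    Satisfies (derive σ A) (p, q) ↔ Satisfies A (hypApply σ p, hypApply σ q) := by
  simp only [Satisfies, ← Alg.eval_derive]
  rfl
end

section
/- The variety V_1 of left normal bands (bands satisfying z·x·y = z·y·x) is not fluid: under the hypersubstitution σ(x·y) = x, the derived variety σ(V_1) satisfies y·x = y, is different from V_1, and is contained in V_1. -/
/-- The variety V₁ of left normal bands: bands with z·x·y = z·y·x. -/
def LeftNormal : Set (Alg sig2) :=
  {A | A ∈ Bands ∧ ∀ z x y, bop A (bop A z x) y = bop A (bop A z y) x}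

/-
Under `σ(x·y) = x` every derived algebra is a left-zero semigroup, and being left-zero is the
single identity `x·y = x`, so the whole derived variety of `V₁` consists of left-zero
semigroups, which are trivially left normal bands. The inclusion is proper because a
nontrivial semilattice, such as `({false, true}, &&)`, is a left normal band but not left-zero.
-/

def leftZeroId : Term sig2 ℕ × Term sig2 ℕ :=
  (Term.app () ![Term.var 0, Term.var 1], Term.var 0)

lemma Alg.eval_app_pair (A : Alg sig2) (v : ℕ → A.carrier) (p q : Term sig2 ℕ) :
    A.eval v (Term.app () ![p, q]) = bop A (A.eval v p) (A.eval v q) := by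
  show A.interp () _ = A.interp () _
  congr 1
  funext k
  fin_cases k <;> rfl

lemma satisfies_leftZeroId_iff (A : Alg sig2) : Satisfies A leftZeroId ↔ A ∈ LeftZero := by
  constructor
  · intro h x y
    simpa [leftZeroId, Alg.eval_app_pair, Alg.eval] using h (fun n => if n = 0 then x else y)
  · intro h v
    simp only [leftZeroId, Alg.eval_app_pair, Alg.eval]
    exact h _ _

lemma varGen_subset_leftZero {K : Set (Alg sig2)} (hK : K ⊆ LeftZero) :
    varGen K ⊆ LeftZero := fun B hB =>
  (satisfies_leftZeroId_iff B).1 <|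
    hB leftZeroId fun A hA => (satisfies_leftZeroId_iff A).2 (hK hA)

lemma derive_proj1_mem_leftZero (A : Alg sig2) : derive proj1 A ∈ LeftZero :=
  fun _ _ => rfl

lemma derivedVariety_proj1_subset_leftZero (V : Set (Alg sig2)) :
    derivedVariety V proj1 ⊆ LeftZero :=
  varGen_subset_leftZero <| by
    rintro _ ⟨A, -, rfl⟩
    exact derive_proj1_mem_leftZero A

lemma leftZero_subset_leftNormal : LeftZero ⊆ LeftNormal := fun A hA =>
  have hA : ∀ x y, bop A x y = x := hA
  ⟨⟨fun x y z => by simp only [hA], fun x => hA x x⟩, fun z x y => by simp only [hA]⟩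

def semilatticeAlg (α : Type) [SemilatticeInf α] [Nonempty α] : Alg sig2 :=
  ⟨α, fun _ args => args ⟨0, Nat.zero_lt_two⟩ ⊓ args ⟨1, Nat.one_lt_two⟩, ‹_›⟩

section semilatticeAlg

variable (α : Type) [SemilatticeInf α]

lemma semilatticeAlg_mem_leftNormal [Nonempty α] : semilatticeAlg α ∈ LeftNormal :=
  ⟨⟨inf_assoc (α := α), inf_idem (α := α)⟩, inf_right_comm (α := α)⟩

lemma semilatticeAlg_not_mem_leftZero [Nontrivial α] : semilatticeAlg α ∉ LeftZero := by
  intro h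
  obtain ⟨x, y, hxy⟩ := exists_pair_ne α
  exact hxy (le_antisymm (inf_eq_left.1 (h x y)) (inf_eq_left.1 (h y x)))

end semilatticeAlg

/-- V₁ is not fluid: under σ(x·y) = x, the derived variety satisfies
y·x = y, is different from V₁, and is contained in V₁. -/
theorem left_normal_not_fluid :
    (∀ A ∈ derivedVariety LeftNormal proj1, ∀ x y, bop A y x = y) ∧
      derivedVariety LeftNormal proj1 ≠ LeftNormal ∧
      derivedVariety LeftNormal proj1 ⊆ LeftNormal ∧
      ¬ Fluid LeftNormal := by
  have hlz := derivedVariety_proj1_subset_leftZero LeftNormal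
  have hsub := hlz.trans leftZero_subset_leftNormal
  have hne : derivedVariety LeftNormal proj1 ≠ LeftNormal := fun h =>
    semilatticeAlg_not_mem_leftZero Bool (hlz (h.ge (semilatticeAlg_mem_leftNormal Bool)))
  exact ⟨fun A hA x y => hlz hA y x, hne, hsub, fun hf => hne (hf proj1 hsub)⟩
end
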